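/- If two rooted trees (T,r) and (T',r') satisfy the level-label condition, then they are isomorphic. -/

import Mathlib

/-!
The isomorphism is built top-down from the roots. Two vertices at the same level with the same
label have children with the same multiset of labels: away from the root, the label of a vertex
is the sorted list of the compressed labels of its children, and compression is injective on the
label set of the level below, which the level-label condition makes common to both trees; at the
roots it is the condition itself at the level below the root. The roots have equal labels, so
matching children label-preservingly and recursing along parent pointers gives a map that sends
the children of every vertex bijectively onto the children of its image, and such a map is a
rooted-tree isomorphism, since in a tree adjacency is the parent relation in one direction or the
other.
-/

attribute [local instance] Classical.propDecidable

namespace AHU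

variable {V : Type*}

/-- The height of the rooted tree `(G, r)`: maximum distance from the root. -/
noncomputable def height (G : SimpleGraph V) [Fintype V] (r : V) : ℕ :=
  Finset.univ.sup fun v => G.dist r v

/-- The level of a vertex: height minus distance from the root. -/
noncomputable def lvl (G : SimpleGraph V) [Fintype V] (r : V) (v : V) : ℕ :=
  height G r - G.dist r v

/-- `T_i`: the set of vertices at level `i`. -/
noncomputable def levelSet (G : SimpleGraph V) [Fintype V] (r : V) (i : ℕ) : Finset V :=
  Finset.univ.filter fun v => lvl G r v = i

/-- A vertex is a leaf if it has degree at most one. -/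
def IsLeaf (G : SimpleGraph V) (v : V) : Prop :=
  {u | G.Adj v u}.ncard ≤ 1

/-- The parent of `v ≠ r`: the unique neighbour of `v` lying closer to the root
(on the unique path from `r` to `v`).  For `v = r` we return `v` itself. -/
noncomputable def parent (G : SimpleGraph V) (r v : V) : V :=
  if h : ∃ p, G.Adj p v ∧ G.dist r p + 1 = G.dist r v then h.choose else v

/-- The set of children of `u`. -/
noncomputable def children (G : SimpleGraph V) [Fintype V] (r u : V) : Finset V :=
  Finset.univ.filter fun v => v ≠ r ∧ parent G r v = u

/-- The label-compression of a finite set `S` of tuples: the unique order isomorphism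
from `(S, ≤lex)` onto `{0, …, |S| - 1}`, i.e. `s ↦ #{t ∈ S | t <lex s}`. -/
noncomputable def compress (S : Finset (List ℕ)) (s : List ℕ) : ℕ :=
  (S.filter fun t => List.Lex (· < ·) t s).card

/-- Auxiliary, level-indexed version of the compressed descendant labeling:
`labelAt G r i v` is the label of a vertex `v` of level `i`. -/
noncomputable def labelAt (G : SimpleGraph V) [Fintype V] (r : V) : ℕ → V → List ℕ
  | 0, _ => []
  | (i + 1), v =>
      if IsLeaf G v then []
      else
        Multiset.sort
          ((children G r v).val.map fun u =>
            compress ((levelSet G r i).image (labelAt G r i)) (labelAt G r i u)) (· ≤ ·)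

/-- The compressed descendant labeling `cdl : V(T) → ℕ*`. -/
noncomputable def cdl (G : SimpleGraph V) [Fintype V] (r : V) (v : V) : List ℕ :=
  labelAt G r (lvl G r v) v

/-- `𝓛(W)`: the multiset of compressed descendant labels of the vertices of `W`. -/
noncomputable def labels (G : SimpleGraph V) [Fintype V] (r : V) (W : Finset V) :
    Multiset (List ℕ) :=
  W.val.map (cdl G r)

/-- The level-label condition: the multisets of labels agree on every level
`i = 0, 1, …, max(height T, height T')`. -/
noncomputable def LevelLabelCondition {V' : Type*} (G : SimpleGraph V) [Fintype V] (r : V)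
    (G' : SimpleGraph V') [Fintype V'] (r' : V') : Prop :=
  ∀ i ≤ max (height G r) (height G' r' ),
    labels G r (levelSet G r i) = labels G' r' (levelSet G' r' i)

theorem _root_.Finset.card_fiber_eq_count_map {α γ : Type*} (s : Finset α) (f : α → γ) (c : γ) :
    Fintype.card {a : s // f a = c} = (s.val.map f).count c := by
  rw [Fintype.card_subtype, Finset.univ_eq_attach, Finset.card_filter, Multiset.count_map,
    ← Finset.filter_val, Finset.card_val, Finset.card_filter]
  simp_rw [@eq_comm _ c]
  exact Finset.sum_attach s fun a => if f a = c then 1 else 0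

theorem _root_.Finset.exists_bijOn_of_map_val_eq {α β γ : Type*} [Nonempty β] {s : Finset α}
    {t : Finset β} {f : α → γ} {g : β → γ} (h : s.val.map f = t.val.map g) :
    ∃ σ : α → β, Set.BijOn σ s t ∧ ∀ a ∈ s, g (σ a) = f a := by
  obtain ⟨e, he⟩ : ∃ e : s ≃ t, ∀ a, g (e a) = f a :=
    ⟨Equiv.ofFiberEquiv fun c => Fintype.equivOfCardEq <| by
      rw [s.card_fiber_eq_count_map, t.card_fiber_eq_count_map, h],
      Equiv.ofFiberEquiv_map (f := fun a : s => f a) (g := fun b : t => g b) _⟩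
  refine ⟨fun a => if ha : a ∈ s then e ⟨a, ha⟩ else Classical.arbitrary β, ⟨?_, ?_, ?_⟩, ?_⟩
  · intro a ha
    simp [Finset.mem_coe.mp ha]
  · intro a ha a' ha' h
    simpa [Finset.mem_coe.mp ha, Finset.mem_coe.mp ha', Subtype.val_inj] using h
  · intro b hb
    exact ⟨e.symm ⟨b, hb⟩, (e.symm ⟨b, hb⟩).2, by simp⟩
  · intro a ha
    simpa [ha] using he ⟨a, ha⟩

theorem _root_.Multiset.eq_of_map_eq_map_of_injOn {α β : Type*} {f : α → β} {S : Set α}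
    (hf : S.InjOn f) {s t : Multiset α} (hs : ∀ x ∈ s, x ∈ S) (ht : ∀ x ∈ t, x ∈ S)
    (h : s.map f = t.map f) : s = t := by
  rcases isEmpty_or_nonempty α with hα | hα
  · exact Subsingleton.elim s t
  have key {u : Multiset α} (hu : ∀ x ∈ u, x ∈ S) : (u.map f).map (Function.invFunOn f S) = u := by
    rw [Multiset.map_map]
    exact (Multiset.map_congr rfl fun x hx => hf.leftInvOn_invFunOn (hu x hx)).trans u.map_id
  rw [← key hs, h, key ht]

theorem compress_strictMonoOn (S : Finset (List ℕ)) : StrictMonoOn (compress S) S := by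
  intro s hs t _ hst
  refine Finset.card_lt_card ⟨Finset.monotone_filter_right S fun _ _ hu => List.lt_trans hu hst, ?_⟩
  intro hsub
  exact lt_irrefl s (Finset.mem_filter.mp (hsub (Finset.mem_filter.mpr ⟨hs, hst⟩))).2

section Parent

variable {G : SimpleGraph V} {r : V}

theorem exists_adj_dist_add_one_eq (hG : G.Connected) {v : V} (hv : v ≠ r) :
    ∃ p, G.Adj p v ∧ G.dist r p + 1 = G.dist r v := by
  obtain ⟨q, hq⟩ := hG.exists_walk_length_eq_dist v r
  have hnil : ¬ q.Nil := SimpleGraph.Walk.not_nil_of_ne hv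
  refine ⟨q.snd, (SimpleGraph.Walk.adj_snd hnil).symm, ?_⟩
  have hle : G.dist r q.snd ≤ q.tail.length := by
    rw [SimpleGraph.dist_comm]; exact SimpleGraph.dist_le _
  have htail := SimpleGraph.Walk.length_tail_add_one hnil
  have hpos : 0 < G.dist r v := hG.pos_dist_of_ne hv.symm
  rw [SimpleGraph.dist_comm] at hq
  rcases (SimpleGraph.Walk.adj_snd hnil).symm.diff_dist_adj (u := r) with h | h | h <;> omega

theorem parent_spec (hG : G.Connected) {v : V} (hv : v ≠ r) :
    G.Adj (parent G r v) v ∧ G.dist r (parent G r v) + 1 = G.dist r v := by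
  have h := exists_adj_dist_add_one_eq hG hv
  rw [parent, dif_pos h]
  exact h.choose_spec

theorem parent_eq_of_adj (hT : G.IsTree) {p v : V} (hadj : G.Adj p v)
    (hd : G.dist r p + 1 = G.dist r v) : parent G r v = p := by
  have hv : v ≠ r := by rintro rfl; simp at hd
  obtain ⟨hadj', hd'⟩ := parent_spec hT.connected hv
  -- Both `p` and `parent G r v` end a shortest path from `r` to `v`, and that path is unique.
  obtain ⟨q, -, hq⟩ := hT.connected.exists_path_of_dist r p
  obtain ⟨q', -, hq'⟩ := hT.connected.exists_path_of_dist r (parent G r v)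
  have hpath := (hT.existsUnique_path r v).unique
    ((q'.concat hadj').isPath_of_length_eq_dist (by rw [q'.length_concat, hq', hd']))
    ((q.concat hadj).isPath_of_length_eq_dist (by rw [q.length_concat, hq, hd]))
  exact (SimpleGraph.Walk.concat_inj hpath).1

theorem adj_iff_parent (hT : G.IsTree) {u v : V} :
    G.Adj u v ↔ (v ≠ r ∧ parent G r v = u) ∨ (u ≠ r ∧ parent G r u = v) := by
  constructor
  · intro h
    rcases hT.dist_eq_dist_add_one_of_adj r h with hd | hd
    · exact Or.inr ⟨by rintro rfl; simp at hd, parent_eq_of_adj hT h.symm hd.symm⟩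
    · exact Or.inl ⟨by rintro rfl; simp at hd, parent_eq_of_adj hT h hd.symm⟩
  · rintro (⟨hv, rfl⟩ | ⟨hu, rfl⟩)
    · exact (parent_spec hT.connected hv).1
    · exact (parent_spec hT.connected hu).1.symm

theorem parent_induction (hG : G.Connected) {P : V → Prop} (root : P r)
    (step : ∀ v, v ≠ r → P (parent G r v) → P v) (v : V) : P v := by
  suffices ∀ n v, G.dist r v = n → P v from this _ v rfl
  intro n
  induction n with
  | zero =>
    intro v hv
    rwa [hG.dist_eq_zero_iff.mp hv] at root
  | succ n ih =>
    intro v hv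
    have hvr : v ≠ r := by rintro rfl; simp at hv
    exact step v hvr (ih _ (by have := (parent_spec hG hvr).2; omega))

theorem exists_parent_recursion {β : Type*} (hG : G.Connected) (b : β) (step : V → β → β) :
    ∃ φ : V → β, φ r = b ∧ ∀ v, v ≠ r → φ v = step v (φ (parent G r v)) := by
  let Φ : ℕ → V → β := fun n => Nat.rec (fun _ => b) (fun _ Φn v => step v (Φn (parent G r v))) n
  refine ⟨fun v => Φ (G.dist r v) v, by simp [Φ], fun v hv => ?_⟩
  simp only [← (parent_spec hG hv).2, Φ]

end Parent

section Levels

variable [Fintype V] {G : SimpleGraph V} {r : V}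

theorem lvl_add_dist (G : SimpleGraph V) (r v : V) : lvl G r v + G.dist r v = height G r := by
  have : G.dist r v ≤ height G r := Finset.le_sup (f := fun v => G.dist r v) (Finset.mem_univ v)
  rw [lvl]; omega

theorem lvl_le_height (G : SimpleGraph V) (r v : V) : lvl G r v ≤ height G r :=
  Nat.sub_le _ _

theorem lvl_root (G : SimpleGraph V) (r : V) : lvl G r r = height G r := by
  simp [lvl]

theorem lvl_eq_height_iff (hG : G.Connected) {v : V} : lvl G r v = height G r ↔ v = r := by
  rw [← lvl_add_dist G r v, Nat.left_eq_add, hG.dist_eq_zero_iff, eq_comm]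

theorem lvl_parent (hG : G.Connected) {v : V} (hv : v ≠ r) :
    lvl G r (parent G r v) = lvl G r v + 1 := by
  have := (parent_spec hG hv).2
  have := lvl_add_dist G r v
  have := lvl_add_dist G r (parent G r v)
  omega

theorem mem_children {u v : V} : v ∈ children G r u ↔ v ≠ r ∧ parent G r v = u := by
  simp [children]

theorem lvl_of_mem_children (hG : G.Connected) {u v : V} (h : v ∈ children G r u) :
    lvl G r v + 1 = lvl G r u := by
  obtain ⟨hv, rfl⟩ := mem_children.mp h
  exact (lvl_parent hG hv).symm

theorem children_eq_empty_of_lvl_eq_zero (hG : G.Connected) {u : V} (hu : lvl G r u = 0) :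
    children G r u = ∅ :=
  Finset.eq_empty_of_forall_notMem fun v hv => by
    have := lvl_of_mem_children hG hv; omega

theorem mem_levelSet {v : V} {i : ℕ} : v ∈ levelSet G r i ↔ lvl G r v = i := by
  simp [levelSet]

theorem root_mem_levelSet_height : r ∈ levelSet G r (height G r) :=
  mem_levelSet.mpr (lvl_root G r)

theorem levelSet_height (hG : G.Connected) : levelSet G r (height G r) = {r} := by
  ext v
  rw [mem_levelSet, Finset.mem_singleton, lvl_eq_height_iff hG]

theorem levelSet_eq_empty {i : ℕ} (hi : height G r < i) : levelSet G r i = ∅ :=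
  Finset.eq_empty_of_forall_notMem fun v hv => by
    have := lvl_le_height G r v; rw [mem_levelSet] at hv; omega

theorem children_root (hG : G.Connected) (h : 0 < height G r) :
    children G r r = levelSet G r (height G r - 1) := by
  ext v
  have hlvl := lvl_add_dist G r v
  rw [mem_children, mem_levelSet]
  constructor
  · rintro ⟨hv, hp⟩
    have := (parent_spec hG hv).2
    rw [hp, SimpleGraph.dist_self] at this
    omega
  · intro hv1
    have hv : v ≠ r := by rintro rfl; rw [lvl_root] at hv1; omega
    have := (parent_spec hG hv).2
    exact ⟨hv, (hG.dist_eq_zero_iff.mp (by omega)).symm⟩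

theorem children_eq_empty_of_isLeaf (hG : G.Connected) {v : V} (hv : v ≠ r)
    (hleaf : IsLeaf G v) : children G r v = ∅ := by
  refine Finset.eq_empty_of_forall_notMem fun w hw => ?_
  obtain ⟨hw, hwv⟩ := mem_children.mp hw
  have hne : w ≠ parent G r v := fun h => by
    have := lvl_parent hG hv
    have := lvl_parent hG hw
    rw [hwv, h] at this; omega
  refine (hleaf.trans_lt ?_).false
  rw [Set.one_lt_ncard (Set.toFinite _)]
  exact ⟨w, hwv ▸ (parent_spec hG hw).1, parent G r v, (parent_spec hG hv).1.symm, hne⟩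

end Levels

section Labels

variable [Fintype V] {G : SimpleGraph V} {r : V}

theorem cdl_eq_labelAt {v : V} {i : ℕ} (h : lvl G r v = i) : cdl G r v = labelAt G r i v := by
  rw [cdl, h]

theorem coe_cdl_eq_map_children (hG : G.Connected) {v : V} (hv : v ≠ r) {i : ℕ}
    (hlvl : lvl G r v = i + 1) :
    (cdl G r v : Multiset ℕ) =
      ((children G r v).val.map (cdl G r)).map (compress ((levelSet G r i).image (cdl G r))) := by
  rw [cdl_eq_labelAt hlvl, labelAt]
  split_ifs with hleaf
  · rw [children_eq_empty_of_isLeaf hG hv hleaf]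
    rfl
  · have hS : (levelSet G r i).image (labelAt G r i) = (levelSet G r i).image (cdl G r) :=
      Finset.image_congr fun w hw => (cdl_eq_labelAt (mem_levelSet.mp hw)).symm
    rw [Multiset.sort_eq, Multiset.map_map, hS]
    refine Multiset.map_congr rfl fun w hw => ?_
    have := lvl_of_mem_children hG hw
    rw [Function.comp_apply, cdl_eq_labelAt (by omega : lvl G r w = i)]

theorem mem_image_cdl_levelSet_of_mem_map_children (hG : G.Connected) {u : V} {i : ℕ}
    (hu : lvl G r u = i + 1) {x : List ℕ} (hx : x ∈ (children G r u).val.map (cdl G r)) :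
    x ∈ (levelSet G r i).image (cdl G r) := by
  obtain ⟨w, hw, rfl⟩ := Multiset.mem_map.mp hx
  have := lvl_of_mem_children hG hw
  exact Finset.mem_image_of_mem _ (mem_levelSet.mpr (by omega))

end Labels

namespace LevelLabelCondition

variable {V' : Type*} [Fintype V] [Fintype V']
variable {G : SimpleGraph V} {r : V} {G' : SimpleGraph V'} {r' : V'}

theorem symm (h : LevelLabelCondition G r G' r') : LevelLabelCondition G' r' G r :=
  fun i hi => (h i (max_comm (height G' r') _ ▸ hi)).symm

theorem labels_eq (h : LevelLabelCondition G r G' r') (i : ℕ) :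
    labels G r (levelSet G r i) = labels G' r' (levelSet G' r' i) := by
  by_cases hi : i ≤ max (height G r) (height G' r')
  · exact h i hi
  · rw [not_le, max_lt_iff] at hi
    rw [levelSet_eq_empty hi.1, levelSet_eq_empty hi.2]
    rfl

theorem height_le (h : LevelLabelCondition G r G' r') : height G r ≤ height G' r' := by
  by_contra hlt
  have hr : cdl G r r ∈ labels G r (levelSet G r (height G r)) :=
    Multiset.mem_map_of_mem _ root_mem_levelSet_height
  rw [h.labels_eq, levelSet_eq_empty (not_le.mp hlt)] at hr
  simp [labels] at hr

theorem height_eq (h : LevelLabelCondition G r G' r') : height G r = height G' r' :=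
  le_antisymm h.height_le h.symm.height_le

theorem image_cdl_levelSet_eq (h : LevelLabelCondition G r G' r') (i : ℕ) :
    (levelSet G r i).image (cdl G r) = (levelSet G' r' i).image (cdl G' r') := by
  apply Finset.val_injective
  rw [Finset.image_val, Finset.image_val]
  exact congrArg Multiset.dedup (h.labels_eq i)

theorem cdl_root_eq (hG : G.Connected) (hG' : G'.Connected) (h : LevelLabelCondition G r G' r') :
    cdl G' r' r' = cdl G r r := by
  have := h.labels_eq (height G r)
  rw [levelSet_height hG, h.height_eq, levelSet_height hG'] at this
  simpa [labels] using this.symm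

theorem map_cdl_children_eq (hG : G.Connected) (hG' : G'.Connected)
    (h : LevelLabelCondition G r G' r') {u : V} {u' : V'} (hlvl : lvl G' r' u' = lvl G r u)
    (hcdl : cdl G' r' u' = cdl G r u) :
    (children G r u).val.map (cdl G r) = (children G' r' u').val.map (cdl G' r') := by
  have hheight := h.height_eq
  cases hu : lvl G r u with
  | zero =>
    rw [children_eq_empty_of_lvl_eq_zero hG hu,
      children_eq_empty_of_lvl_eq_zero hG' (hlvl.trans hu)]
    rfl
  | succ i =>
    by_cases hur : u = r
    · subst hur
      have hu'r : u' = r' := (lvl_eq_height_iff hG').mp (by rw [hlvl, lvl_root, hheight])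
      subst hu'r
      rw [lvl_root] at hu
      rw [children_root hG (by omega), children_root hG' (by omega), hheight]
      exact h.labels_eq _
    have hu'r : u' ≠ r' := fun hu' =>
      hur ((lvl_eq_height_iff hG).mp (by rw [← hlvl, hu', lvl_root, hheight]))
    have hu' := hlvl.trans hu
    have e := coe_cdl_eq_map_children hG hur hu
    have e' := coe_cdl_eq_map_children hG' hu'r hu'
    rw [← h.image_cdl_levelSet_eq i] at e'
    refine Multiset.eq_of_map_eq_map_of_injOn (compress_strictMonoOn _).injOn
      (fun x hx => mem_image_cdl_levelSet_of_mem_map_children hG hu hx)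
      (fun x hx => ?_) (by rw [← e, ← e', hcdl])
    rw [Finset.mem_coe, h.image_cdl_levelSet_eq i]
    exact mem_image_cdl_levelSet_of_mem_map_children hG' hu' hx

theorem exists_bijOn_children (hG : G.Connected) (hG' : G'.Connected)
    (h : LevelLabelCondition G r G' r') :
    ∃ φ : V → V', φ r = r' ∧ ∀ u, Set.BijOn φ (children G r u) (children G' r' (φ u)) := by
  have : Nonempty V' := ⟨r'⟩
  choose! σ hσ hσcdl using fun u u' (hl : lvl G' r' u' = lvl G r u)
    (hc : cdl G' r' u' = cdl G r u) =>
    Finset.exists_bijOn_of_map_val_eq (h.map_cdl_children_eq hG hG' hl hc)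
  obtain ⟨φ, hφr, hφ⟩ := exists_parent_recursion hG r' fun v x => σ (parent G r v) x v
  have hinv : ∀ v, lvl G' r' (φ v) = lvl G r v ∧ cdl G' r' (φ v) = cdl G r v := by
    refine parent_induction (r := r) hG ?_ fun v hv ⟨hl, hc⟩ => ?_
    · rw [hφr, lvl_root, lvl_root, h.height_eq]
      exact ⟨rfl, h.cdl_root_eq hG hG'⟩
    · have hvp : v ∈ children G r (parent G r v) := mem_children.mpr ⟨hv, rfl⟩
      rw [hφ v hv]
      refine ⟨?_, hσcdl _ _ hl hc v hvp⟩
      have := lvl_of_mem_children hG' ((hσ _ _ hl hc).mapsTo hvp)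
      have := lvl_of_mem_children hG hvp
      omega
  refine ⟨φ, hφr, fun u => (hσ u (φ u) (hinv u).1 (hinv u).2).congr fun v hv => ?_⟩
  obtain ⟨hvr, rfl⟩ := mem_children.mp hv
  exact (hφ v hvr).symm

end LevelLabelCondition

section Iso

variable {V' : Type*} [Fintype V] [Fintype V']
variable {G : SimpleGraph V} {r : V} {G' : SimpleGraph V'} {r' : V'} {φ : V → V'}

theorem ne_root_and_parent_map_of_mapsTo_children
    (hφ : ∀ u, Set.MapsTo φ (children G r u) (children G' r' (φ u))) {v : V} (hv : v ≠ r) :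
    φ v ≠ r' ∧ parent G' r' (φ v) = φ (parent G r v) :=
  mem_children.mp (hφ _ (mem_children.mpr ⟨hv, rfl⟩))

theorem injective_of_bijOn_children (hG : G.Connected) (hroot : φ r = r')
    (hφ : ∀ u, Set.BijOn φ (children G r u) (children G' r' (φ u))) : Function.Injective φ := by
  have hpar {v : V} := ne_root_and_parent_map_of_mapsTo_children (v := v) fun u => (hφ u).mapsTo
  intro v
  refine parent_induction (r := r) (P := fun v => ∀ w, φ v = φ w → v = w) hG ?_ ?_ v
  · intro w hw
    by_contra hwr
    exact (hpar (Ne.symm hwr)).1 (hw ▸ hroot)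
  · intro v hv ih w hvw
    have hw : w ≠ r := by
      rintro rfl
      exact (hpar hv).1 (hvw.trans hroot)
    have hp : parent G r v = parent G r w := ih _ (by rw [← (hpar hv).2, ← (hpar hw).2, hvw])
    exact (hφ (parent G r v)).injOn (mem_children.mpr ⟨hv, rfl⟩) (mem_children.mpr ⟨hw, hp.symm⟩)
      hvw

theorem surjective_of_bijOn_children (hG' : G'.Connected) (hroot : φ r = r')
    (hφ : ∀ u, Set.BijOn φ (children G r u) (children G' r' (φ u))) : Function.Surjective φ := by
  refine parent_induction hG' ⟨r, hroot⟩ fun v' hv' ⟨p, hp⟩ => ?_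
  obtain ⟨v, -, rfl⟩ := (hφ p).surjOn (mem_children.mpr ⟨hv', hp.symm⟩ : v' ∈ children G' r' (φ p))
  exact ⟨v, rfl⟩

theorem adj_iff_of_bijOn_children (hT : G.IsTree) (hT' : G'.IsTree) (hinj : Function.Injective φ)
    (hroot : φ r = r') (hφ : ∀ u, Set.BijOn φ (children G r u) (children G' r' (φ u)))
    {a b : V} : G'.Adj (φ a) (φ b) ↔ G.Adj a b := by
  have key (v w : V) : (φ v ≠ r' ∧ parent G' r' (φ v) = φ w) ↔ (v ≠ r ∧ parent G r v = w) := by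
    by_cases hv : v = r
    · simp [hv, hroot]
    · obtain ⟨hφv, hpar⟩ := ne_root_and_parent_map_of_mapsTo_children (fun u => (hφ u).mapsTo) hv
      rw [hpar, hinj.eq_iff]
      exact and_congr_left fun _ => iff_of_true hφv hv
  rw [adj_iff_parent hT', adj_iff_parent hT, key, key]

theorem exists_iso_of_bijOn_children (hT : G.IsTree) (hT' : G'.IsTree) (hroot : φ r = r')
    (hφ : ∀ u, Set.BijOn φ (children G r u) (children G' r' (φ u))) :
    ∃ ψ : G ≃g G', ψ r = r' := by
  have hinj := injective_of_bijOn_children hT.connected hroot hφ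
  have hsurj := surjective_of_bijOn_children hT'.connected hroot hφ
  exact ⟨⟨Equiv.ofBijective φ ⟨hinj, hsurj⟩, adj_iff_of_bijOn_children hT hT' hinj hroot hφ⟩,
    hroot⟩

end Iso

/-- If two rooted trees satisfy the level-label condition, then they are isomorphic. -/
theorem iso_of_levelLabelCondition {V V' : Type*} [Fintype V] [Fintype V']
    (G : SimpleGraph V) (r : V) (G' : SimpleGraph V') (r' : V')
    (hT : G.IsTree) (hT' : G'.IsTree) (hLL : LevelLabelCondition G r G' r') :
    ∃ φ : G ≃g G', φ r = r' := by
  obtain ⟨φ, hroot, hφ⟩ := hLL.exists_bijOn_children hT.connected hT'.connected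
  exact exists_iso_of_bijOn_children hT hT' hroot hφ

end AHU
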